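/- Let G be a bipartite simple graph with diameter 8 and girth 16. Then every path in G with 10 vertices (a path of length 9) is a subgraph of exactly one 16-cycle of G. -/

import Mathlib

/-!
A shortest path `q` from `b` back to `a` has length at most 8, and its length is odd because
`p` followed by `q` is a closed walk in a bipartite graph. Two distinct paths with the same ends
whose lengths add up to less than the girth would contain a shorter cycle, so `p` and `q` meet only
at their ends and together form a cycle of length `9 + |q| ≥ 16`; hence `|q| = 7`. Conversely a
16-cycle containing `p` consists of `p` and a complementary path of length 7 from `b` to `a`, which
by the same girth argument is `q`.
-/

namespace SimpleGraph.Walk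

variable {V : Type*} {G : SimpleGraph V}

theorem IsPath.eq_of_length_add_lt_egirth {u v : V} {p q : G.Walk u v} (hp : p.IsPath)
    (hq : q.IsPath) (h : ((p.length + q.length : ℕ) : ℕ∞) < G.egirth) : p = q := by
  by_contra hne
  obtain ⟨_, -, -, c, hc, hlen⟩ := hp.exists_isCycle_length_le_add_of_ne hq hne
  exact h.not_ge ((egirth_le_length hc).trans (by exact_mod_cast hlen))

theorem IsPath.start_notMem_support_tail {u v : V} {p : G.Walk u v} (hp : p.IsPath) :
    u ∉ p.support.tail := by
  have := hp.support_nodup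
  rw [← p.cons_tail_support, List.nodup_cons] at this
  exact this.1

theorem IsPath.isCycle_append_of_length_add_le_egirth [DecidableEq V] {u v : V}
    {p : G.Walk u v} {q : G.Walk v u} (hp : p.IsPath) (hq : q.IsPath) (hpq : p ≠ q.reverse)
    (hn : 1 < p.length ∨ 1 < q.length) (h : ((p.length + q.length : ℕ) : ℕ∞) ≤ G.egirth) :
    (p.append q).IsCycle := by
  -- A common inner vertex would split `p` and `q.reverse` into two pairs of paths with common
  -- ends and total length below the girth, so both pairs coincide.
  refine hp.isCycle_append hq (fun w hwp hwq => hpq ?_) hn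
  have hwu : w ≠ u := fun hw => hp.start_notMem_support_tail (hw ▸ hwp)
  have hwv : w ≠ v := fun hw => hq.start_notMem_support_tail (hw ▸ hwq)
  have hwp := List.mem_of_mem_tail hwp
  have hwq := List.mem_of_mem_tail hwq
  have hlt {m : ℕ} (hm : m < p.length + q.length) : (m : ℕ∞) < G.egirth :=
    lt_of_lt_of_le (by exact_mod_cast hm) h
  have hfirst : p.takeUntil w hwp = (q.dropUntil w hwq).reverse :=
    (hp.takeUntil hwp).eq_of_length_add_lt_egirth (hq.dropUntil hwq).reverse <| hlt <| by
      have := length_takeUntil_lt_length hwp hwv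
      have := length_dropUntil_lt_length hwq hwv
      simp only [length_reverse]; omega
  have hsecond : p.dropUntil w hwp = (q.takeUntil w hwq).reverse :=
    (hp.dropUntil hwp).eq_of_length_add_lt_egirth (hq.takeUntil hwq).reverse <| hlt <| by
      have := length_dropUntil_lt_length hwp hwu
      have := length_takeUntil_lt_length hwq hwu
      simp only [length_reverse]; omega
  rw [← p.take_spec hwp, ← q.take_spec hwq, hfirst, hsecond, reverse_append]

theorem edges_subset_of_cons_edges_subset {u x v w : V} (h : G.Adj u x) {p : G.Walk x v}
    {t : G.Walk x w} (hp : (cons h p).IsPath) (hpt : (cons h p).edges ⊆ (cons h t).edges) :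
    p.edges ⊆ t.edges := fun e he => by
  have hne : e ≠ s(u, x) := fun hux => ((cons_isPath_iff _ _).mp hp).2
    (p.fst_mem_support_of_mem_edges (hux ▸ he))
  simpa [hne] using hpt (List.mem_cons_of_mem _ he)

theorem IsPath.exists_eq_append_of_edges_subset {u v w : V} {p : G.Walk u v} {t : G.Walk u w}
    (hp : p.IsPath) (ht : t.IsPath) (h : p.edges ⊆ t.edges) : ∃ r : G.Walk v w, t = p.append r := by
  induction p with
  | nil => exact ⟨t, rfl⟩
  | @cons u x v hux p ih =>
    have hx : x = t.snd := ht.eq_snd_of_mem_edges (h (by simp))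
    cases t with
    | nil => simp at h
    | cons _ t =>
      simp only [snd_cons] at hx
      subst hx
      obtain ⟨r, rfl⟩ := ih ((cons_isPath_iff _ _).mp hp).1 ((cons_isPath_iff _ _).mp ht).1
        (edges_subset_of_cons_edges_subset hux hp h)
      exact ⟨r, rfl⟩

theorem IsCycle.eq_snd_or_eq_penultimate_of_mem_edges {u x : V} {c : G.Walk u u}
    (hc : c.IsCycle) (h : s(u, x) ∈ c.edges) : x = c.snd ∨ x = c.penultimate := by
  cases c with
  | nil => simp at h
  | cons hadj t =>
    rw [edges_cons, List.mem_cons] at h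
    rcases h with h | h
    · exact .inl (by rw [snd_cons]; exact Sym2.congr_right.mp h)
    · have ht : ¬ t.Nil := fun hnil => by simp [edges_eq_nil.mpr hnil] at h
      rw [penultimate_cons_of_not_nil _ _ ht]
      exact .inr (((cons_isCycle_iff _ _).mp hc).1.eq_penultimate_of_mem_edges h)

theorem IsCycle.exists_isPath_eq_append {u v : V} {c : G.Walk u u} (hc : c.IsCycle)
    {p : G.Walk u v} (hp : p.IsPath) (hnil : ¬ p.Nil) (hsnd : p.snd = c.snd)
    (h : p.edges ⊆ c.edges) : ∃ r : G.Walk v u, r.IsPath ∧ c = p.append r := by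
  cases c with
  | nil => exact absurd hc not_isCycle_nil
  | cons hadj t =>
    cases p with
    | nil => exact absurd nil_nil hnil
    | cons hadj' p =>
      simp only [snd_cons] at hsnd
      subst hsnd
      have ht := ((cons_isCycle_iff _ _).mp hc).1
      obtain ⟨r, rfl⟩ := ((cons_isPath_iff _ _).mp hp).1.exists_eq_append_of_edges_subset ht
        (edges_subset_of_cons_edges_subset hadj hp h)
      exact ⟨r, ht.of_append_right, rfl⟩

theorem IsCycle.exists_isPath_edges_perm_append [DecidableEq V] {w a b : V} {c : G.Walk w w}
    (hc : c.IsCycle) {p : G.Walk a b} (hp : p.IsPath) (hnil : ¬ p.Nil) (h : p.edges ⊆ c.edges) :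
    ∃ r : G.Walk b a, r.IsPath ∧ c.edges.Perm (p.edges ++ r.edges) := by
  have hfirst : s(a, p.snd) ∈ c.edges := h (p.mk_start_snd_mem_edges hnil)
  have ha : a ∈ c.support := c.fst_mem_support_of_mem_edges hfirst
  have hc' : (c.rotate a ha).IsCycle := hc.rotate ha
  have hperm : c.edges.Perm (c.rotate a ha).edges := (c.rotate_edges a ha).perm.symm
  have h' : p.edges ⊆ (c.rotate a ha).edges := fun e he => hperm.subset (h he)
  rcases hc'.eq_snd_or_eq_penultimate_of_mem_edges (hperm.subset hfirst) with hsnd | hsnd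
  · obtain ⟨r, hr, hcr⟩ := hc'.exists_isPath_eq_append hp hnil hsnd h'
    exact ⟨r, hr, by rwa [hcr, edges_append] at hperm⟩
  · obtain ⟨r, hr, hcr⟩ := hc'.reverse.exists_isPath_eq_append hp hnil
      (by rw [snd_reverse, hsnd]) (by simpa [edges_reverse] using h')
    refine ⟨r, hr, hperm.trans <| (List.reverse_perm _).symm.trans ?_⟩
    rw [← edges_reverse, hcr, edges_append]

end SimpleGraph.Walk

namespace SimpleGraph

variable {V : Type*} {G : SimpleGraph V}

theorem egirth_eq_of_girth_eq {n : ℕ} (h : G.girth = n) (hn : n ≠ 0) : G.egirth = n := by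
  have htop : G.egirth ≠ ⊤ := fun htop => hn (by rw [← h, girth, htop, ENat.toNat_top])
  rw [← h, girth, ENat.natCast_toNat htop]

end SimpleGraph

open SimpleGraph Walk

universe u

/-- In a bipartite graph of diameter 8 and girth 16, every path on 10 vertices
(a path of length 9) is a subgraph of exactly one 16-cycle, where cycles are
identified with their edge sets (rotations and reflections count once). -/
theorem path_length_nine_in_unique_sixteen_cycle {V : Type u} [DecidableEq V]
    (G : SimpleGraph V) (hbip : G.Colorable 2)
    (hdiam : G.diam = 8) (hgirth : G.girth = 16)
    {a b : V} (p : G.Walk a b) (hp : p.IsPath) (hlen : p.length = 9) :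
    ∃! s : Finset (Sym2 V),
      (∃ (w : V) (c : G.Walk w w), c.IsCycle ∧ c.length = 16 ∧ c.edges.toFinset = s) ∧
      p.edges.toFinset ⊆ s := by
  have hegirth : G.egirth = 16 := egirth_eq_of_girth_eq hgirth (by norm_num)
  obtain ⟨q, hq, hqdist⟩ := p.reverse.reachable.exists_path_of_dist
  have hq8 : q.length ≤ 8 :=
    hqdist ▸ hdiam ▸ dist_le_diam fun htop => by simp [diam_eq_zero_of_ediam_eq_top htop] at hdiam
  have heven : Even (9 + q.length) :=
    hlen ▸ length_append p q ▸ two_colorable_iff_forall_loop_even.mp hbip a (p.append q)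
  rw [Nat.even_iff] at heven
  have hcycle : (p.append q).IsCycle :=
    hp.isCycle_append_of_length_add_le_egirth hq
      (fun h => by have := congrArg length h; rw [length_reverse] at this; omega) (by omega)
      (by rw [hegirth, hlen]; exact_mod_cast (by omega : 9 + q.length ≤ 16))
  have hq7 : q.length = 7 := by
    have h16 : 16 ≤ (p.append q).length := by exact_mod_cast hegirth ▸ egirth_le_length hcycle
    rw [length_append] at h16
    omega
  refine ⟨(p.append q).edges.toFinset, ⟨⟨a, _, hcycle, by simp [hlen, hq7], rfl⟩, ?_⟩, ?_⟩
  · simp [edges_append]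
  rintro s ⟨⟨w, c, hc, hc16, rfl⟩, hsub⟩
  obtain ⟨r, hr, hperm⟩ := hc.exists_isPath_edges_perm_append hp
    (by simp [← length_eq_zero_iff, hlen])
    fun e he => List.mem_toFinset.mp (hsub (List.mem_toFinset.mpr he))
  have hr7 : r.length = 7 := by
    have := hperm.length_eq
    simp only [List.length_append, length_edges] at this
    omega
  obtain rfl : r = q := hr.eq_of_length_add_lt_egirth hq (by rw [hegirth, hr7, hq7]; norm_num)
  rw [edges_append]
  exact List.toFinset_eq_of_perm _ _ hperm
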